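/- Let G be a group and M a subgroup of G that is abelian and malnormal in G. Let C be a subgroup of M, and let v, w be elements of G such that v ∉ M or w ∉ M. Then there exists at most one pair of elements γ₁, γ₂ ∈ C such that w = γ₁ v γ₂; that is, if γ₁, γ₂, γ₃, γ₄ ∈ C satisfy γ₁ v γ₂ = w = γ₃ v γ₄, then γ₁ = γ₃ and γ₂ = γ₄. -/

import Mathlib

/-!
If `a₁ v b₁ = a₂ v b₂` with all `aᵢ, bᵢ ∈ M`, then `v` conjugates `a₂⁻¹ a₁ ∈ M` to `b₂ b₁⁻¹ ∈ M`.
Since `v ∉ M` (otherwise `w` would lie in `M` too), malnormality forces `a₁ = a₂`, and then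
`b₁ = b₂` by cancellation.
-/

namespace Subgroup

variable {G : Type*} [Group G]

def IsMalnormal (M : Subgroup G) : Prop :=
  ∀ g : G, g ∉ M → ∀ x ∈ M, g⁻¹ * x * g ∈ M → x = 1

theorem mul_mul_mem_iff (H : Subgroup G) {a b : G} (ha : a ∈ H) (hb : b ∈ H) (v : G) :
    a * v * b ∈ H ↔ v ∈ H := by
  rw [H.mul_mem_cancel_right hb, H.mul_mem_cancel_left ha]

theorem IsMalnormal.eq_and_eq_of_mul_mul_eq {M : Subgroup G} (hM : M.IsMalnormal) {v : G}
    (hv : v ∉ M) {a₁ a₂ b₁ b₂ : G} (ha₁ : a₁ ∈ M) (ha₂ : a₂ ∈ M) (hb₁ : b₁ ∈ M) (hb₂ : b₂ ∈ M)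
    (h : a₁ * v * b₁ = a₂ * v * b₂) : a₁ = a₂ ∧ b₁ = b₂ := by
  have hconj : v⁻¹ * (a₂⁻¹ * a₁) * v = b₂ * b₁⁻¹ := by
    rw [show a₁ = a₂ * v * b₂ * b₁⁻¹ * v⁻¹ by rw [← h]; group]
    group
  have ha : a₂⁻¹ * a₁ = 1 :=
    hM v hv _ (M.mul_mem (M.inv_mem ha₂) ha₁) (hconj ▸ M.mul_mem hb₂ (M.inv_mem hb₁))
  obtain rfl := (inv_mul_eq_one.mp ha).symm
  exact ⟨rfl, mul_left_cancel h⟩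

end Subgroup

theorem stmt_0_general {G : Type*} [Group G] (M : Subgroup G)
    (hmalnormal : ∀ g : G, g ∉ M → ∀ x ∈ M, g⁻¹ * x * g ∈ M → x = 1)
    (C : Subgroup G) (hCM : C ≤ M)
    (v w : G) (hvw : v ∉ M ∨ w ∉ M)
    (γ₁ γ₂ γ₃ γ₄ : G)
    (hγ₁ : γ₁ ∈ C) (hγ₂ : γ₂ ∈ C) (hγ₃ : γ₃ ∈ C) (hγ₄ : γ₄ ∈ C)
    (h₁ : γ₁ * v * γ₂ = w) (h₂ : γ₃ * v * γ₄ = w) :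
    γ₁ = γ₃ ∧ γ₂ = γ₄ := by
  have hw : w ∈ M ↔ v ∈ M := h₁ ▸ M.mul_mul_mem_iff (hCM hγ₁) (hCM hγ₂) v
  have hv : v ∉ M := fun hv => hvw.elim (· hv) (· (hw.mpr hv))
  exact Subgroup.IsMalnormal.eq_and_eq_of_mul_mul_eq hmalnormal hv (hCM hγ₁) (hCM hγ₃)
    (hCM hγ₂) (hCM hγ₄) (h₁.trans h₂.symm)

/-- Lemma 4 (uniqueness part): if `M` is an abelian malnormal subgroup of `G`,
`C ≤ M`, and `v ∉ M` or `w ∉ M`, then there is at most one pair `γ₁, γ₂ ∈ C`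
with `w = γ₁ * v * γ₂`. -/
theorem stmt_0 {G : Type*} [Group G] (M : Subgroup G)
    (habelian : ∀ x ∈ M, ∀ y ∈ M, x * y = y * x)
    (hmalnormal : ∀ g : G, g ∉ M → ∀ x ∈ M, g⁻¹ * x * g ∈ M → x = 1)
    (C : Subgroup G) (hCM : C ≤ M)
    (v w : G) (hvw : v ∉ M ∨ w ∉ M)
    (γ₁ γ₂ γ₃ γ₄ : G)
    (hγ₁ : γ₁ ∈ C) (hγ₂ : γ₂ ∈ C) (hγ₃ : γ₃ ∈ C) (hγ₄ : γ₄ ∈ C)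
    (h₁ : γ₁ * v * γ₂ = w) (h₂ : γ₃ * v * γ₄ = w) :
    γ₁ = γ₃ ∧ γ₂ = γ₄ :=
  stmt_0_general M hmalnormal C hCM v w hvw γ₁ γ₂ γ₃ γ₄ hγ₁ hγ₂ hγ₃ hγ₄ h₁ h₂
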